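/- arXiv:2603.05233 — 2 statements merged into one kernel-verified Lean document; each statement's English description precedes it below -/
import Mathlib

section
/- There exists an absolute constant C > 0 such that for every l with 0 < l ≤ 2π, one has ∫_{z ∈ D, |z - 1| ≥ 4l} | 1/(z - 1) - (1/l)·∫_{-l/2}^{l/2} 1/(z - e^{iθ}) dθ | dm(z) ≤ C·l. -/
open MeasureTheory

/-- `|e^{iθ} - 1| ≤ |θ|`. -/
lemma sfe_abs_exp_sub_one (θ : ℝ) :
    norm (Complex.exp ((θ : ℂ) * Complex.I) - 1) ≤ |θ| := by
  have h : Complex.exp ((θ : ℂ) * Complex.I) - 1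
      = ((Real.cos θ - 1 : ℝ) : ℂ) + ((Real.sin θ : ℝ) : ℂ) * Complex.I := by
    rw [Complex.exp_mul_I]
    push_cast
    ring
  rw [h, Complex.norm_add_mul_I]
  have h1 := Real.sin_sq_add_cos_sq θ
  have h2 := Real.one_sub_sq_div_two_le_cos (x := θ)
  have h3 : (Real.cos θ - 1) ^ 2 + Real.sin θ ^ 2 ≤ θ ^ 2 := by nlinarith [Real.cos_le_one θ]
  calc Real.sqrt ((Real.cos θ - 1) ^ 2 + Real.sin θ ^ 2)
      ≤ Real.sqrt (θ ^ 2) := Real.sqrt_le_sqrt h3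
    _ = |θ| := Real.sqrt_sq_eq_abs θ

/-- `t - sin t ≤ t³` for `0 < t ≤ π`. -/
lemma sfe_sub_sin_le {t : ℝ} (ht : 0 < t) (ht' : t ≤ Real.pi) :
    t - Real.sin t ≤ t ^ 3 := by
  rcases le_or_gt t 1 with h | h
  · have := Real.sin_gt_sub_cube ht
    nlinarith [pow_nonneg ht.le 3]
  · have hs := Real.sin_nonneg_of_nonneg_of_le_pi ht.le ht'
    nlinarith [mul_pos (mul_pos ht (sub_pos.2 h)) (show (0:ℝ) < t + 1 by linarith)]

/-- Pointwise estimate on the region. -/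
lemma sfe_pointwise {l : ℝ} (hl : 0 < l) (hl2 : l ≤ 2 * Real.pi) {z : ℂ}
    (hz : norm z < 1) (hz2 : 4 * l ≤ norm (z - 1)) :
    norm ((z - 1)⁻¹ -
        ((l : ℝ) : ℂ)⁻¹ *
          ∫ θ in (-(l / 2))..(l / 2), (z - Complex.exp ((θ : ℂ) * Complex.I))⁻¹)
      ≤ l ^ 2 * ((norm (z - 1)) ^ 3)⁻¹ := by
  set r : ℝ := norm (z - 1) with hr_def
  have hr : 0 < r := lt_of_lt_of_le (by positivity) hz2
  have hr2 : r < 2 := by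
    have h1 : norm (z - 1) ≤ norm z + 1 := by
      simpa using norm_sub_le z 1
    calc r ≤ norm z + 1 := h1
      _ < 2 := by linarith
  have hz1 : z - 1 ≠ 0 := by
    intro h
    rw [hr_def, h] at hr
    simp at hr
  have hll : (-(l / 2) : ℝ) ≤ l / 2 := by linarith
  have hI : Set.uIcc (-(l / 2)) (l / 2) = Set.Icc (-(l / 2)) (l / 2) :=
    Set.uIcc_of_le hll
  -- denominator lower bound
  have hden : ∀ θ ∈ Set.uIcc (-(l / 2)) (l / 2),
      7 / 8 * r ≤ norm (z - Complex.exp ((θ : ℂ) * Complex.I)) := by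
    intro θ hθ
    rw [hI, Set.mem_Icc] at hθ
    have hθl : |θ| ≤ l / 2 := abs_le.2 ⟨hθ.1, hθ.2⟩
    have h1 : norm (Complex.exp ((θ : ℂ) * Complex.I) - 1) ≤ l / 2 :=
      (sfe_abs_exp_sub_one θ).trans hθl
    have h2 : r - norm (Complex.exp ((θ : ℂ) * Complex.I) - 1)
        ≤ norm (z - Complex.exp ((θ : ℂ) * Complex.I)) := by
      have h3 := norm_sub_norm_le (z - 1) (Complex.exp ((θ : ℂ) * Complex.I) - 1)
      have heq : (z - 1) - (Complex.exp ((θ : ℂ) * Complex.I) - 1)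
          = z - Complex.exp ((θ : ℂ) * Complex.I) := by ring
      rw [heq] at h3
      simpa using h3
    have : l / 2 ≤ r / 8 := by linarith
    linarith
  have hne : ∀ θ ∈ Set.uIcc (-(l / 2)) (l / 2),
      z - Complex.exp ((θ : ℂ) * Complex.I) ≠ 0 := by
    intro θ hθ h0
    have := hden θ hθ
    rw [h0] at this
    simp only [norm_zero] at this
    nlinarith
  -- continuity
  have hcont : Continuous fun θ : ℝ => z - Complex.exp ((θ : ℂ) * Complex.I) :=
    continuous_const.sub (Complex.continuous_exp.comp (Complex.continuous_ofReal.mul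
      continuous_const))
  have hfcont : ContinuousOn (fun θ : ℝ => (z - Complex.exp ((θ : ℂ) * Complex.I))⁻¹)
      (Set.uIcc (-(l / 2)) (l / 2)) :=
    ContinuousOn.inv₀ hcont.continuousOn hne
  have hfint : IntervalIntegrable (fun θ : ℝ => (z - Complex.exp ((θ : ℂ) * Complex.I))⁻¹)
      volume (-(l / 2)) (l / 2) := hfcont.intervalIntegrable
  have hl0 : ((l : ℝ) : ℂ) ≠ 0 := Complex.ofReal_ne_zero.2 hl.ne'
  -- Step A : rewrite the difference as l⁻¹ * ∫ (difference)
  have keyA : (z - 1)⁻¹ -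
      ((l : ℝ) : ℂ)⁻¹ * ∫ θ in (-(l / 2))..(l / 2), (z - Complex.exp ((θ : ℂ) * Complex.I))⁻¹
      = ((l : ℝ) : ℂ)⁻¹ * ∫ θ in (-(l / 2))..(l / 2),
          ((z - 1)⁻¹ - (z - Complex.exp ((θ : ℂ) * Complex.I))⁻¹) := by
    rw [intervalIntegral.integral_sub intervalIntegrable_const hfint,
      intervalIntegral.integral_const]
    have h2 : (l / 2 - -(l / 2)) • (z - 1)⁻¹ = ((l : ℝ) : ℂ) * (z - 1)⁻¹ := by
      rw [Complex.real_smul]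
      norm_num
    rw [h2, mul_sub, ← mul_assoc, inv_mul_cancel₀ hl0, one_mul]
  rw [keyA]
  -- Step B : decomposition of the integrand
  have hdecomp : Set.EqOn
      (fun θ : ℝ => (z - 1)⁻¹ - (z - Complex.exp ((θ : ℂ) * Complex.I))⁻¹)
      (fun θ : ℝ => ((z - 1) ^ 2)⁻¹ * (1 - Complex.exp ((θ : ℂ) * Complex.I))
        - ((z - 1) ^ 2)⁻¹ * ((1 - Complex.exp ((θ : ℂ) * Complex.I)) ^ 2
            * (z - Complex.exp ((θ : ℂ) * Complex.I))⁻¹))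
      (Set.uIcc (-(l / 2)) (l / 2)) := by
    intro θ hθ
    have h0 := hne θ hθ
    field_simp
    ring
  rw [intervalIntegral.integral_congr hdecomp]
  have hg1int : IntervalIntegrable
      (fun θ : ℝ => ((z - 1) ^ 2)⁻¹ * (1 - Complex.exp ((θ : ℂ) * Complex.I)))
      volume (-(l / 2)) (l / 2) :=
    (continuous_const.mul (continuous_const.sub (Complex.continuous_exp.comp
      (Complex.continuous_ofReal.mul continuous_const)))).intervalIntegrable _ _
  have hg2int : IntervalIntegrable
      (fun θ : ℝ => ((z - 1) ^ 2)⁻¹ * ((1 - Complex.exp ((θ : ℂ) * Complex.I)) ^ 2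
        * (z - Complex.exp ((θ : ℂ) * Complex.I))⁻¹))
      volume (-(l / 2)) (l / 2) := by
    apply ContinuousOn.intervalIntegrable
    exact continuousOn_const.mul
      ((((continuous_const.sub (Complex.continuous_exp.comp
        (Complex.continuous_ofReal.mul continuous_const))).pow 2).continuousOn).mul hfcont)
  rw [intervalIntegral.integral_sub hg1int hg2int,
    intervalIntegral.integral_const_mul, intervalIntegral.integral_const_mul]
  -- first integral value
  have hE : ∫ θ in (-(l / 2))..(l / 2), (1 - Complex.exp ((θ : ℂ) * Complex.I))
      = ((l - 2 * Real.sin (l / 2) : ℝ) : ℂ) := by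
    have h1 : IntervalIntegrable (fun _ : ℝ => (1 : ℂ)) volume (-(l / 2)) (l / 2) :=
      intervalIntegrable_const
    have h2 : IntervalIntegrable (fun θ : ℝ => Complex.exp ((θ : ℂ) * Complex.I))
        volume (-(l / 2)) (l / 2) :=
      (Complex.continuous_exp.comp (Complex.continuous_ofReal.mul
        continuous_const)).intervalIntegrable _ _
    rw [intervalIntegral.integral_sub h1 h2]
    have h3 : (fun θ : ℝ => Complex.exp ((θ : ℂ) * Complex.I))
        = fun θ : ℝ => Complex.exp (Complex.I * (θ : ℂ)) := by
      funext θ; rw [mul_comm]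
    rw [h3, integral_exp_mul_complex Complex.I_ne_zero, intervalIntegral.integral_const]
    rw [mul_comm Complex.I ((l / 2 : ℝ) : ℂ), mul_comm Complex.I ((-(l / 2) : ℝ) : ℂ),
      Complex.exp_mul_I, Complex.exp_mul_I]
    have hcos : Complex.cos ((-(l / 2) : ℝ) : ℂ) = Complex.cos ((l / 2 : ℝ) : ℂ) := by
      push_cast; rw [Complex.cos_neg]
    have hsin : Complex.sin ((-(l / 2) : ℝ) : ℂ) = -Complex.sin ((l / 2 : ℝ) : ℂ) := by
      push_cast; rw [Complex.sin_neg]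
    rw [hcos, hsin]
    have : Complex.cos ((l / 2 : ℝ) : ℂ) + Complex.sin ((l / 2 : ℝ) : ℂ) * Complex.I -
        (Complex.cos ((l / 2 : ℝ) : ℂ) + -Complex.sin ((l / 2 : ℝ) : ℂ) * Complex.I)
        = 2 * Complex.sin ((l / 2 : ℝ) : ℂ) * Complex.I := by ring
    rw [this, mul_div_assoc, div_self Complex.I_ne_zero, mul_one, Complex.real_smul]
    push_cast
    ring
  rw [hE]
  -- bound on the first integral
  have hEbound : norm ((l - 2 * Real.sin (l / 2) : ℝ) : ℂ) ≤ l ^ 3 / 4 := by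
    rw [Complex.norm_real, Real.norm_eq_abs]
    have h1 : Real.sin (l / 2) ≤ l / 2 := Real.sin_le (by linarith)
    have h2 : l / 2 - Real.sin (l / 2) ≤ (l / 2) ^ 3 :=
      sfe_sub_sin_le (by linarith) (by linarith)
    rw [abs_of_nonneg (by linarith)]
    nlinarith
  -- bound on the second integral
  have hH : norm (∫ θ in (-(l / 2))..(l / 2),
      ((1 - Complex.exp ((θ : ℂ) * Complex.I)) ^ 2
        * (z - Complex.exp ((θ : ℂ) * Complex.I))⁻¹))
      ≤ (l / 2) ^ 2 * (7 / 8 * r)⁻¹ * l := by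
    have hb : ∀ θ ∈ Set.uIoc (-(l / 2)) (l / 2),
        ‖(1 - Complex.exp ((θ : ℂ) * Complex.I)) ^ 2
          * (z - Complex.exp ((θ : ℂ) * Complex.I))⁻¹‖ ≤ (l / 2) ^ 2 * (7 / 8 * r)⁻¹ := by
      intro θ hθ
      have hθ' : θ ∈ Set.uIcc (-(l / 2)) (l / 2) := by
        rw [Set.uIoc_of_le hll] at hθ
        rw [hI]
        exact Set.Ioc_subset_Icc_self hθ
      have hθl : |θ| ≤ l / 2 := by
        rw [hI, Set.mem_Icc] at hθ'
        exact abs_le.2 ⟨hθ'.1, hθ'.2⟩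
      have h1 : norm (1 - Complex.exp ((θ : ℂ) * Complex.I)) ≤ l / 2 := by
        have : (1 : ℂ) - Complex.exp ((θ : ℂ) * Complex.I)
            = -(Complex.exp ((θ : ℂ) * Complex.I) - 1) := by ring
        rw [this, norm_neg]
        exact (sfe_abs_exp_sub_one θ).trans hθl
      have h2 : (norm (z - Complex.exp ((θ : ℂ) * Complex.I)))⁻¹ ≤ (7 / 8 * r)⁻¹ := by
        apply inv_anti₀ (by positivity) (hden θ hθ')
      rw [norm_mul, norm_pow, norm_inv]
      have hnn1 : (0:ℝ) ≤ norm (1 - Complex.exp ((θ : ℂ) * Complex.I)) :=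
        norm_nonneg _
      have hnn2 : (0:ℝ) ≤ (norm (z - Complex.exp ((θ : ℂ) * Complex.I)))⁻¹ := by
        positivity
      exact mul_le_mul (by nlinarith) h2 hnn2 (by positivity)
    have := intervalIntegral.norm_integral_le_of_norm_le_const hb
    have habs : |l / 2 - -(l / 2)| = l := by
      rw [abs_of_nonneg (by linarith)]
      ring
    rw [habs] at this
    exact this
  -- assemble
  set E : ℂ := ((l - 2 * Real.sin (l / 2) : ℝ) : ℂ) with hEdef
  set H : ℂ := ∫ θ in (-(l / 2))..(l / 2),
      ((1 - Complex.exp ((θ : ℂ) * Complex.I)) ^ 2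
        * (z - Complex.exp ((θ : ℂ) * Complex.I))⁻¹) with hHdef
  have hr2ne : ((z - 1) ^ 2 : ℂ) ≠ 0 := pow_ne_zero _ hz1
  have habsA : norm (((z - 1) ^ 2)⁻¹ * E - ((z - 1) ^ 2)⁻¹ * H)
      ≤ (r ^ 2)⁻¹ * (l ^ 3 / 4) + (r ^ 2)⁻¹ * ((l / 2) ^ 2 * (7 / 8 * r)⁻¹ * l) := by
    have htri : norm (((z - 1) ^ 2)⁻¹ * E - ((z - 1) ^ 2)⁻¹ * H)
        ≤ norm (((z - 1) ^ 2)⁻¹ * E) + norm (((z - 1) ^ 2)⁻¹ * H) := by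
      exact norm_sub_le (((z - 1) ^ 2)⁻¹ * E) (((z - 1) ^ 2)⁻¹ * H)
    have hA : norm (((z - 1) ^ 2)⁻¹ * E) ≤ (r ^ 2)⁻¹ * (l ^ 3 / 4) := by
      rw [norm_mul, norm_inv, norm_pow]
      exact mul_le_mul_of_nonneg_left hEbound (by positivity)
    have hB : norm (((z - 1) ^ 2)⁻¹ * H) ≤ (r ^ 2)⁻¹ * ((l / 2) ^ 2 * (7 / 8 * r)⁻¹ * l) := by
      rw [norm_mul, norm_inv, norm_pow]
      exact mul_le_mul_of_nonneg_left hH (by positivity)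
    linarith
  have key : l⁻¹ * ((r ^ 2)⁻¹ * (l ^ 3 / 4) + (r ^ 2)⁻¹ * ((l / 2) ^ 2 * (7 / 8 * r)⁻¹ * l))
      ≤ l ^ 2 * (r ^ 3)⁻¹ := by
    have heq : l⁻¹ * ((r ^ 2)⁻¹ * (l ^ 3 / 4) + (r ^ 2)⁻¹ * ((l / 2) ^ 2 * (7 / 8 * r)⁻¹ * l))
        = l ^ 2 / (4 * r ^ 2) + 2 * l ^ 2 / (7 * r ^ 3) := by
      field_simp
      ring
    have heq2 : l ^ 2 * (r ^ 3)⁻¹ = l ^ 2 / r ^ 3 := by rw [div_eq_mul_inv]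
    rw [heq, heq2, div_add_div _ _ (by positivity : (4 * r ^ 2 : ℝ) ≠ 0)
      (by positivity : (7 * r ^ 3 : ℝ) ≠ 0), div_le_div_iff₀ (by positivity) (by positivity)]
    nlinarith [mul_nonneg (mul_nonneg (sq_nonneg l) (pow_nonneg hr.le 5)) (sub_pos.2 hr2).le]
  calc norm (((l : ℝ) : ℂ)⁻¹ * (((z - 1) ^ 2)⁻¹ * E - ((z - 1) ^ 2)⁻¹ * H))
      = l⁻¹ * norm (((z - 1) ^ 2)⁻¹ * E - ((z - 1) ^ 2)⁻¹ * H) := by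
        rw [norm_mul, norm_inv, Complex.norm_real, Real.norm_eq_abs, abs_of_pos hl]
    _ ≤ l⁻¹ * ((r ^ 2)⁻¹ * (l ^ 3 / 4) + (r ^ 2)⁻¹ * ((l / 2) ^ 2 * (7 / 8 * r)⁻¹ * l)) := by
        exact mul_le_mul_of_nonneg_left habsA (by positivity)
    _ ≤ l ^ 2 * (r ^ 3)⁻¹ := key

/-- Estimate away from the pole: for `0 < l ≤ 2π`,
`∫_{z ∈ 𝔻, |z-1| ≥ 4l} |1/(z-1) - (1/l)∫_{-l/2}^{l/2} dθ/(z - e^{iθ})| dm(z) ≤ C·l`. -/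
theorem single_fraction_estimate_away_from_pole :
    ∃ C : ℝ, 0 < C ∧
      ∀ l : ℝ, 0 < l → l ≤ 2 * Real.pi →
        ∫ z in Metric.ball (0 : ℂ) 1 ∩ {z : ℂ | 4 * l ≤ ‖(z - 1)‖},
            ‖((z - 1)⁻¹ -
              ((l : ℝ) : ℂ)⁻¹ *
                ∫ θ in (-(l / 2))..(l / 2),
                  (z - Complex.exp ((θ : ℂ) * Complex.I))⁻¹)‖ ≤
          C * l := by
  refine ⟨2, by norm_num, ?_⟩
  intro l hl hl2
  have h4l : (0:ℝ) < 4 * l := by linarith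
  set S : Set ℂ := Metric.ball (0 : ℂ) 1 ∩ {z : ℂ | 4 * l ≤ norm (z - 1)} with hSdef
  set A : Set ℂ := Metric.closedBall (0:ℂ) 2 \ Metric.ball (0:ℂ) (4*l) with hAdef
  set F : ℂ → ℝ := Set.indicator A (fun w => ((norm w) ^ 3)⁻¹) with hFdef
  have hAmeas : MeasurableSet A := measurableSet_closedBall.diff measurableSet_ball
  have hAcomp : IsCompact A := (isCompact_closedBall _ _).diff Metric.isOpen_ball
  have hconton : ContinuousOn (fun w : ℂ => ((norm w) ^ 3)⁻¹) A := by
    apply ContinuousOn.inv₀ ((continuous_norm.pow 3).continuousOn)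
    intro w hw
    have h1 : ¬ ‖w‖ < 4 * l := by
      have := hw.2
      rwa [Metric.mem_ball, Complex.dist_eq, sub_zero] at this
    have h2 : 0 < norm w := by
      linarith [not_lt.1 h1]
    exact pow_ne_zero _ h2.ne'
  have hFint : Integrable F volume := by
    rw [hFdef]
    exact (hconton.integrableOn_compact hAcomp).integrable_indicator hAmeas
  set f : ℝ → ℝ := Set.indicator (Set.Icc (4*l) 2) (fun y => (y ^ 3)⁻¹) with hfdef
  have hmemA : ∀ w : ℂ, w ∈ A ↔ ‖w‖ ∈ Set.Icc (4*l) 2 := by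
    intro w
    rw [hAdef]
    simp only [Set.mem_diff, Metric.mem_closedBall, Metric.mem_ball, Complex.dist_eq, sub_zero,
      Set.mem_Icc, not_lt]
    tauto
  have hFf : ∀ w : ℂ, F w = f ‖w‖ := by
    intro w
    have h := hmemA w
    rw [hFdef, hfdef]
    by_cases hw : w ∈ A
    · rw [Set.indicator_of_mem hw, Set.indicator_of_mem (h.1 hw)]
    · rw [Set.indicator_of_notMem hw, Set.indicator_of_notMem (fun hc => hw (h.2 hc))]
  set I1 : ℝ := ∫ y in Set.Ioi (0:ℝ), y ^ 1 • f y with hI1def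
  have hrad : ∫ w : ℂ, F w = 2 * Real.pi * I1 := by
    have h1 : ∫ w : ℂ, F w = ∫ w : ℂ, f ‖w‖ := by simp_rw [hFf]
    rw [h1, MeasureTheory.integral_fun_norm_addHaar volume f, Complex.finrank_real_complex]
    have h2 : volume.real (Metric.ball (0:ℂ) 1) = Real.pi := by
      rw [measureReal_def, Complex.volume_ball]
      simp [ENNReal.toReal_mul, ENNReal.toReal_pow]
    rw [h2]
    rw [smul_eq_mul, nsmul_eq_mul, hI1def]
    push_cast
    ring
  have hI1nonneg : 0 ≤ I1 := by
    rw [hI1def]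
    apply setIntegral_nonneg measurableSet_Ioi
    intro y hy
    simp only [pow_one, smul_eq_mul]
    apply mul_nonneg (le_of_lt hy)
    apply Set.indicator_nonneg
    intro x hx
    have : (0:ℝ) < x := lt_of_lt_of_le h4l hx.1
    positivity
  have hI1le : I1 ≤ (4*l)⁻¹ := by
    have hsub : Set.Icc (4*l) 2 ⊆ Set.Ioi (0:ℝ) := fun y hy => lt_of_lt_of_le h4l hy.1
    have hstep1 : I1 = ∫ y in Set.Icc (4*l) 2, y * (y ^ 3)⁻¹ := by
      rw [hI1def]
      have heq : ∀ y : ℝ, y ^ 1 • f y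
          = Set.indicator (Set.Icc (4*l) 2) (fun y => y * (y ^ 3)⁻¹) y := by
        intro y
        rw [hfdef]
        simp only [pow_one, smul_eq_mul, Set.indicator_apply]
        split_ifs <;> simp
      simp_rw [heq]
      rw [MeasureTheory.setIntegral_indicator measurableSet_Icc,
        Set.inter_eq_self_of_subset_right hsub]
    have hstep2 : ∫ y in Set.Icc (4*l) 2, y * (y ^ 3)⁻¹
        = ∫ y in Set.Icc (4*l) 2, y ^ (-2:ℝ) := by
      apply setIntegral_congr_fun measurableSet_Icc
      intro y hy
      have hy0 : 0 < y := lt_of_lt_of_le h4l hy.1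
      have h3 : y ^ (-2:ℝ) = (y ^ (2:ℕ))⁻¹ := by
        rw [Real.rpow_neg hy0.le]
        norm_num [Real.rpow_natCast]
      show y * (y ^ 3)⁻¹ = y ^ (-2:ℝ)
      rw [h3]
      field_simp
    have hstep3 : ∫ y in Set.Icc (4*l) 2, y ^ (-2:ℝ)
        ≤ ∫ y in Set.Ioi (4*l), y ^ (-2:ℝ) := by
      apply setIntegral_mono_set (integrableOn_Ioi_rpow_of_lt (by norm_num) h4l)
      · apply (ae_restrict_iff' measurableSet_Ioi).2
        apply Filter.Eventually.of_forall
        intro y hy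
        have : (0:ℝ) < y := lt_trans h4l hy
        positivity
      · rw [MeasureTheory.ae_le_set]
        apply measure_mono_null (t := {4*l})
        · intro y hy
          simp only [Set.mem_diff, Set.mem_Icc, Set.mem_Ioi, not_lt] at hy
          simp only [Set.mem_singleton_iff]
          exact le_antisymm hy.2 hy.1.1
        · exact Real.volume_singleton
    have hstep4 : ∫ y in Set.Ioi (4*l), y ^ (-2:ℝ) = (4*l)⁻¹ := by
      rw [integral_Ioi_rpow_of_lt (by norm_num) h4l]
      norm_num [Real.rpow_neg_one, mul_inv]
    rw [hstep1, hstep2]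
    rw [hstep4] at hstep3
    exact hstep3
  set G : ℂ → ℝ := fun z => l ^ 2 * F (z - 1) with hGdef
  have hGint : Integrable G volume := (hFint.comp_sub_right (1:ℂ)).const_mul _
  have hGnonneg : ∀ z, 0 ≤ G z := by
    intro z
    rw [hGdef]
    apply mul_nonneg (by positivity)
    apply Set.indicator_nonneg
    intro w _
    positivity
  have hSmeas : MeasurableSet S := by
    apply Metric.isOpen_ball.measurableSet.inter
    exact (isClosed_le continuous_const
      (continuous_norm.comp (continuous_id.sub continuous_const))).measurableSet
  have hmono : (∫ z in S,
      norm ((z - 1)⁻¹ -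
        ((l : ℝ) : ℂ)⁻¹ * ∫ θ in (-(l / 2))..(l / 2),
          (z - Complex.exp ((θ : ℂ) * Complex.I))⁻¹)) ≤ ∫ z in S, G z := by
    apply integral_mono_of_nonneg
    · exact Filter.Eventually.of_forall fun z => norm_nonneg _
    · exact hGint.integrableOn
    · apply (ae_restrict_iff' hSmeas).2
      apply Filter.Eventually.of_forall
      intro z hz
      obtain ⟨hz1, hz2⟩ := hz
      rw [Metric.mem_ball, Complex.dist_eq, sub_zero] at hz1
      rw [Set.mem_setOf_eq] at hz2
      have hpt := sfe_pointwise hl hl2 hz1 hz2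
      have hzA : z - 1 ∈ A := by
        rw [hAdef]
        constructor
        · rw [Metric.mem_closedBall, Complex.dist_eq, sub_zero]
          have := norm_sub_le z 1
          simp only [norm_one] at this ⊢
          linarith
        · rw [Metric.mem_ball, Complex.dist_eq, sub_zero]
          exact not_lt.2 hz2
      have hGz : G z = l ^ 2 * ((norm (z - 1)) ^ 3)⁻¹ := by
        rw [hGdef]
        simp only
        rw [hFdef, Set.indicator_of_mem hzA]
      simpa only [hGz] using hpt
  have hmono2 : ∫ z in S, G z ≤ ∫ z, G z :=
    setIntegral_le_integral hGint (Filter.Eventually.of_forall hGnonneg)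
  have hval : ∫ z, G z = l ^ 2 * (2 * Real.pi * I1) := by
    rw [hGdef]
    simp only
    rw [MeasureTheory.integral_const_mul]
    congr 1
    rw [integral_sub_right_eq_self F (1:ℂ)]
    exact hrad
  have hfinal : l ^ 2 * (2 * Real.pi * I1) ≤ 2 * l := by
    have h1 : l ^ 2 * (2 * Real.pi * I1) ≤ l ^ 2 * (2 * Real.pi * (4*l)⁻¹) := by
      apply mul_le_mul_of_nonneg_left _ (by positivity)
      apply mul_le_mul_of_nonneg_left hI1le (by positivity)
    have h2 : l ^ 2 * (2 * Real.pi * (4*l)⁻¹) = Real.pi * l / 2 := by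
      field_simp
      ring
    have h3 : Real.pi * l / 2 ≤ 2 * l := by
      nlinarith [Real.pi_le_four]
    linarith
  linarith [hmono, hmono2, hval ▸ hmono2]
end

section
/- Let n ∈ ℕ and let z_1, …, z_n be points of the open unit disc D ⊂ ℂ. Then 2π·Σ_{k=1}^n dist(z_k, T) ≤ ∫_{D} | Σ_{k=1}^n 1/(z - z_k) | dm(z), where dist(z_k, T) = 1 - |z_k| is the distance from z_k to the unit circle T. -/
open MeasureTheory
open Set Real

lemma snd_zero_null : (volume {q : ℝ × ℝ | q.2 = 0}) = 0 := by
  have B : volume (LinearMap.ker (LinearMap.snd ℝ ℝ ℝ) : Set (ℝ × ℝ)) = 0 := by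
    apply Measure.addHaar_submodule
    rw [Ne, LinearMap.ker_eq_top]
    intro h
    have : (LinearMap.snd ℝ ℝ ℝ) (0, 1) = (0 : ℝ × ℝ →ₗ[ℝ] ℝ) (0, 1) := by rw [h]
    simp at this
  have : {q : ℝ × ℝ | q.2 = 0} = (LinearMap.ker (LinearMap.snd ℝ ℝ ℝ) : Set (ℝ × ℝ)) := by
    ext q; simp [LinearMap.mem_ker]
  rw [this]; exact B

lemma polar_stuff (R : ℝ) (g : ℂ → ℝ) :
    (IntegrableOn g (Metric.ball (0:ℂ) R) ↔
      IntegrableOn (fun p : ℝ × ℝ => p.1 • g (Complex.polarCoord.symm p))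
        (Ioo 0 R ×ˢ Ioo (-π) π)) ∧
    ∫ w in Metric.ball (0:ℂ) R, g w =
      ∫ p in Ioo 0 R ×ˢ Ioo (-π) π, p.1 • g (Complex.polarCoord.symm p) := by
  set s : Set (ℝ × ℝ) := Ioo 0 R ×ˢ Ioo (-π) π with hs_def
  have hs : MeasurableSet s := (measurableSet_Ioo.prod measurableSet_Ioo)
  have hsub : s ⊆ polarCoord.target := by
    rw [polarCoord_target]
    exact Set.prod_mono Ioo_subset_Ioi_self subset_rfl
  set e := Complex.measurableEquivRealProd with he_def
  set G : ℝ × ℝ → ℝ := fun q => g (e.symm q) with hG_def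
  -- the derivative
  set B : ℝ × ℝ → ℝ × ℝ →L[ℝ] ℝ × ℝ := fun p =>
    LinearMap.toContinuousLinearMap (Matrix.toLin (Module.Basis.finTwoProd ℝ) (Module.Basis.finTwoProd ℝ)
      !![cos p.2, -p.1 * sin p.2; sin p.2, p.1 * cos p.2]) with hB
  have hderiv : ∀ p ∈ s, HasFDerivWithinAt polarCoord.symm (B p) s p := fun p _ =>
    (hasFDerivAt_polarCoord_symm p).hasFDerivWithinAt
  have B_det : ∀ p ∈ s, |(B p).det| = p.1 := by
    rintro ⟨r, θ⟩ ⟨hr, -⟩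
    have : (B (r, θ)).det = r := by
      conv_rhs => rw [← one_mul r, ← cos_sq_add_sin_sq θ]
      simp only [hB, neg_mul, LinearMap.det_toContinuousLinearMap, LinearMap.det_toLin,
        Matrix.det_fin_two_of, sub_neg_eq_add]
      ring
    rw [this, abs_of_pos hr.1]
  have hinj : InjOn polarCoord.symm s := polarCoord.symm.injOn.mono hsub
  set A : Set (ℝ × ℝ) := polarCoord.symm '' s with hA_def
  set Bq : Set (ℝ × ℝ) := {q | Real.sqrt (q.1^2 + q.2^2) < R} with hBq_def
  have hAB : A =ᵐ[volume] Bq := by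
    have h1 : A ⊆ Bq := by
      rintro q ⟨⟨r, θ⟩, ⟨hr, -⟩, rfl⟩
      simp only [hBq_def, mem_setOf_eq, polarCoord_symm_apply]
      have : (r * cos θ)^2 + (r * sin θ)^2 = r^2 := by
        have := sin_sq_add_cos_sq θ; nlinarith
      rw [this, Real.sqrt_sq hr.1.le]
      exact hr.2
    have h2 : Bq \ A ⊆ {q : ℝ × ℝ | q.2 = 0} := by
      rintro ⟨x, y⟩ ⟨hq, hqA⟩
      by_contra hy
      simp only [mem_setOf_eq] at hy
      apply hqA
      have hsrc : (x, y) ∈ polarCoord.source := by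
        rw [polarCoord_source]; right; exact hy
      refine ⟨polarCoord (x, y), ?_, polarCoord.left_inv hsrc⟩
      have hpos : 0 < x^2 + y^2 := by positivity
      constructor
      · constructor
        · simp only [polarCoord_apply]
          exact Real.sqrt_pos.2 hpos
        · simpa only [hBq_def, mem_setOf_eq, polarCoord_apply] using hq
      · simp only [polarCoord_apply, mem_Ioo]
        refine ⟨Complex.neg_pi_lt_arg _, ?_⟩
        rw [Complex.arg_lt_pi_iff]
        right
        simpa using hy
    rw [Filter.eventuallyEq_set]
    rw [ae_iff]
    refine measure_mono_null ?_ snd_zero_null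
    intro q hq
    simp only [mem_setOf_eq] at hq
    by_cases hqA : q ∈ A
    · exact absurd (Iff.intro (fun _ => h1 hqA) (fun _ => hqA)) hq
    · by_cases hqB : q ∈ Bq
      · exact h2 ⟨hqB, hqA⟩
      · exact absurd (Iff.intro (fun h => absurd h hqA) (fun h => absurd h hqB)) hq
  -- change of variables on the ℝ × ℝ side
  have key1 : IntegrableOn G A volume ↔
      IntegrableOn (fun p => |(B p).det| • G (polarCoord.symm p)) s volume :=
    integrableOn_image_iff_integrableOn_abs_det_fderiv_smul volume hs hderiv hinj G
  have key2 : ∫ q in A, G q = ∫ p in s, |(B p).det| • G (polarCoord.symm p) :=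
    integral_image_eq_integral_abs_det_fderiv_smul volume hs hderiv hinj G
  have hGP : ∀ p ∈ s, |(B p).det| • G (polarCoord.symm p)
      = p.1 • g (Complex.polarCoord.symm p) := by
    intro p hp
    rw [B_det p hp]
    have harg : (e.symm (polarCoord.symm p) : ℂ) = Complex.polarCoord.symm p := by
      rw [Complex.polarCoord_symm_apply, polarCoord_symm_apply]
      rw [show ∀ q : ℝ × ℝ, (e.symm q : ℂ) = (q.1 : ℂ) + (q.2 : ℂ) * Complex.I from fun q => by
        simp [he_def, Complex.measurableEquivRealProd, Complex.equivRealProdCLM_symm_apply]]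
      push_cast
      ring
    show p.1 • g (e.symm (polarCoord.symm p)) = p.1 • g (Complex.polarCoord.symm p)
    rw [harg]
  have hres : volume.restrict A = volume.restrict Bq := Measure.restrict_congr_set hAB
  have hpre : (⇑e.symm) ⁻¹' (Metric.ball (0:ℂ) R) = Bq := by
    ext q
    simp only [mem_preimage, Metric.mem_ball, dist_zero_right, hBq_def, mem_setOf_eq]
    rw [show (e.symm q : ℂ) = (q.1 : ℝ) + (q.2 : ℝ) * Complex.I by
      simp [he_def, Complex.measurableEquivRealProd, Complex.equivRealProdCLM_symm_apply]]
    rw [Complex.norm_add_mul_I]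
  have hmp : MeasurePreserving (⇑e.symm) volume volume :=
    Complex.volume_preserving_equiv_real_prod.symm
  have hrestr : MeasurePreserving (⇑e.symm) (volume.restrict Bq)
      (volume.restrict (Metric.ball (0:ℂ) R)) := by
    rw [← hpre]
    exact hmp.restrict_preimage measurableSet_ball
  have hemb : MeasurableEmbedding (⇑e.symm) := e.symm.measurableEmbedding
  have int1 : Integrable (g ∘ ⇑e.symm) (volume.restrict Bq) ↔
      Integrable g (volume.restrict (Metric.ball (0:ℂ) R)) :=
    hrestr.integrable_comp_emb hemb
  have hGeq : G = g ∘ ⇑e.symm := rfl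
  have int2 : IntegrableOn G Bq volume ↔ IntegrableOn g (Metric.ball (0:ℂ) R) volume := by
    rw [hGeq]; exact int1
  have int3 : IntegrableOn G A volume ↔ IntegrableOn G Bq volume := by
    rw [IntegrableOn, IntegrableOn, hres]
  have eq1 : ∫ q, (g ∘ ⇑e.symm) q ∂(volume.restrict Bq) = ∫ w in Metric.ball (0:ℂ) R, g w :=
    hrestr.integral_comp hemb g
  constructor
  · rw [← int2, int3.symm, key1]
    exact integrableOn_congr_fun hGP hs
  · rw [← eq1, show ∫ q, (g ∘ ⇑e.symm) q ∂(volume.restrict Bq) = ∫ q in A, G q from by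
      rw [← hres]; rfl]
    rw [key2]
    exact setIntegral_congr_fun hs hGP

lemma invnorm_integrable (R : ℝ) : IntegrableOn (fun w : ℂ => ‖w‖⁻¹) (Metric.ball 0 R) := by
  rw [(polar_stuff R _).1]
  have hconst : IntegrableOn (fun _ : ℝ × ℝ => (1:ℝ)) (Ioo 0 R ×ˢ Ioo (-π) π) := by
    refine integrableOn_const ?_
    exact ((Metric.isBounded_Ioo _ _).prod (Metric.isBounded_Ioo _ _)).measure_lt_top.ne
  refine hconst.congr_fun ?_ (measurableSet_Ioo.prod measurableSet_Ioo)
  rintro ⟨r, θ⟩ ⟨hr, -⟩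
  have : ‖(Complex.polarCoord.symm (r, θ) : ℂ)‖ = r := by
    rw [Complex.norm_polarCoord_symm, abs_of_pos hr.1]
  simp only [this, smul_eq_mul]
  rw [mul_inv_cancel₀ hr.1.ne']

lemma invnorm_sub_integrable (a : ℂ) (ha : a ∈ Metric.ball (0:ℂ) 1) :
    IntegrableOn (fun w : ℂ => ‖w - a‖⁻¹) (Metric.ball 0 1) := by
  have h2 : IntegrableOn (fun w : ℂ => ‖w - a‖⁻¹) (Metric.ball a 2) := by
    have hmp : MeasurePreserving (fun w : ℂ => w + a) volume volume :=
      measurePreserving_add_right volume a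
    have hpre : (fun w : ℂ => w + a) ⁻¹' (Metric.ball a 2) = Metric.ball 0 2 := by
      ext w
      simp [Metric.mem_ball, dist_eq_norm]
    have hrestr : MeasurePreserving (fun w : ℂ => w + a)
        (volume.restrict (Metric.ball (0:ℂ) 2)) (volume.restrict (Metric.ball a 2)) := by
      rw [← hpre]
      exact hmp.restrict_preimage measurableSet_ball
    have hemb : MeasurableEmbedding (fun w : ℂ => w + a) :=
      (MeasurableEquiv.addRight a).measurableEmbedding
    have := (hrestr.integrable_comp_emb hemb
      (g := fun w : ℂ => ‖w - a‖⁻¹)).mp ?_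
    · exact this
    · have : ((fun w : ℂ => ‖w - a‖⁻¹) ∘ fun w : ℂ => w + a) = fun w : ℂ => ‖w‖⁻¹ := by
        funext w; simp
      rw [this]
      exact invnorm_integrable 2
  refine h2.mono_set ?_
  intro w hw
  simp only [Metric.mem_ball, dist_zero_right] at hw ha
  rw [Metric.mem_ball, dist_eq_norm]
  calc ‖w - a‖ ≤ ‖w‖ + ‖a‖ := norm_sub_le _ _
  _ < 2 := by linarith [hw, ha]

/-- For points `z_1, …, z_n` in the open unit disc,
`2π·∑ (1 - |z_k|) ≤ ∫_𝔻 |∑ 1/(z - z_k)| dm(z)`. -/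
theorem sum_dist_to_circle_le_integral (n : ℕ) (z : Fin n → ℂ)
    (hz : ∀ k, z k ∈ Metric.ball (0 : ℂ) 1) :
    2 * Real.pi * ∑ k, (1 - ‖z k‖) ≤
      ∫ w in Metric.ball (0 : ℂ) 1, ‖∑ k, (w - z k)⁻¹‖ := by
  classical
  set f : ℂ → ℂ := fun w => ∑ k, (w - z k)⁻¹ with hf_def
  set g : ℂ → ℝ := fun w => ‖f w‖ with hg_def
  have hrw : ∫ w in Metric.ball (0:ℂ) 1, ‖∑ k, (w - z k)⁻¹‖
      = ∫ w in Metric.ball (0:ℂ) 1, g w := by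
    simp only [hg_def, hf_def]
  rw [hrw]
  -- integrability of g on the unit ball
  have hIntf : IntegrableOn f (Metric.ball (0:ℂ) 1) := by
    apply integrable_finset_sum
    intro k _
    have hk := invnorm_sub_integrable (z k) (hz k)
    refine hk.mono' ?_ ?_
    · exact ((measurable_id.sub_const (z k)).inv).aestronglyMeasurable
    · filter_upwards with w
      rw [norm_inv]
  have hIntg : IntegrableOn g (Metric.ball (0:ℂ) 1) := hIntf.norm
  have key := polar_stuff 1 g
  rw [key.2]
  set s : Set (ℝ × ℝ) := Ioo (0:ℝ) 1 ×ˢ Ioo (-π) π with hs_def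
  set H : ℝ × ℝ → ℝ := fun p => p.1 • g (Complex.polarCoord.symm p) with hH_def
  have hIntS : IntegrableOn H s := key.1.mp hIntg
  have hprod : (volume : Measure (ℝ × ℝ)).restrict s
      = (volume.restrict (Ioo (0:ℝ) 1)).prod (volume.restrict (Ioo (-π) π)) := by
    rw [Measure.prod_restrict, ← Measure.volume_eq_prod]
  have hH2 : Integrable H ((volume.restrict (Ioo (0:ℝ) 1)).prod (volume.restrict (Ioo (-π) π))) := by
    rw [← hprod]; exact hIntS
  have hFub : ∫ p in s, H p = ∫ r in Ioo (0:ℝ) 1, ∫ θ in Ioo (-π) π, H (r, θ) := by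
    rw [show ∫ p in s, H p = ∫ p, H p ∂((volume : Measure (ℝ × ℝ)).restrict s) from rfl, hprod]
    exact MeasureTheory.integral_prod _ hH2
  rw [show (∫ p in s, p.1 • g (Complex.polarCoord.symm p)) = ∫ p in s, H p from rfl, hFub]
  set φ : ℝ → ℝ := fun r => ∫ θ in Ioo (-π) π, H (r, θ) with hφ_def
  have hφInt : Integrable φ (volume.restrict (Ioo (0:ℝ) 1)) := hH2.integral_prod_left
  set ψ : ℝ → ℝ := fun r => ∑ k, (Ioi (‖z k‖)).indicator (fun _ => 2*π) r with hψ_def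
  have hψIntk : ∀ k : Fin n, Integrable ((Ioi (‖z k‖)).indicator (fun _ => 2*π))
      (volume.restrict (Ioo (0:ℝ) 1)) := by
    intro k
    refine Integrable.indicator ?_ measurableSet_Ioi
    refine integrableOn_const ?_
    rw [Real.volume_Ioo]
    exact ENNReal.ofReal_ne_top
  have hψInt : Integrable ψ (volume.restrict (Ioo (0:ℝ) 1)) := by
    apply integrable_finset_sum
    intro k _
    exact hψIntk k
  -- value of the LHS
  have hLHS : ∫ r in Ioo (0:ℝ) 1, ψ r = 2 * π * ∑ k, (1 - ‖z k‖) := by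
    rw [integral_finset_sum _ (fun k _ => hψIntk k)]
    have hterm : ∀ k : Fin n, ∫ r in Ioo (0:ℝ) 1,
        (Ioi (‖z k‖)).indicator (fun _ => 2*π) r = (1 - ‖z k‖) * (2*π) := by
      intro k
      have ha0 : 0 ≤ ‖z k‖ := norm_nonneg _
      have ha1 : ‖z k‖ < 1 := by
        have := hz k
        rwa [Metric.mem_ball, dist_zero_right] at this
      rw [setIntegral_indicator measurableSet_Ioi]
      have hset : Ioo (0:ℝ) 1 ∩ Ioi (‖z k‖) = Ioo (‖z k‖) 1 := by
        ext r
        simp only [Set.mem_inter_iff, Set.mem_Ioo, Set.mem_Ioi]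
        constructor
        · rintro ⟨⟨-, h2⟩, h3⟩; exact ⟨h3, h2⟩
        · rintro ⟨h1, h2⟩; exact ⟨⟨lt_of_le_of_lt ha0 h1, h2⟩, h1⟩
      rw [hset, setIntegral_const, measureReal_def, Real.volume_Ioo, ENNReal.toReal_ofReal (by linarith)]
      simp [smul_eq_mul]
    rw [Finset.sum_congr rfl (fun k _ => hterm k), ← Finset.sum_mul]
    ring
  rw [← hLHS]
  -- the pointwise inequality
  have hpt : ∀ r ∈ Ioo (0:ℝ) 1, (∀ k, ‖z k‖ ≠ r) → ψ r ≤ φ r := by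
    intro r hr hne
    have hr0 : 0 < r := hr.1
    -- circle integrability
    have hck : ∀ k : Fin n, CircleIntegrable (fun w => (w - z k)⁻¹) 0 r := by
      intro k
      refine circleIntegrable_sub_inv_iff.2 (Or.inr ?_)
      intro hmem
      apply hne k
      rw [Metric.mem_sphere, dist_zero_right, abs_of_pos hr0] at hmem
      exact hmem
    have hcf : CircleIntegrable f 0 r := by
      rw [CircleIntegrable]
      have : (fun θ => f (circleMap 0 r θ))
          = ∑ k : Fin n, (fun θ => (circleMap 0 r θ - z k)⁻¹) := by
        funext θ
        simp [hf_def]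
      rw [this]
      exact IntervalIntegrable.sum _ (fun k _ => hck k)
    -- value of the circle integral
    have hval : (∮ w in C(0, r), f w)
        = ((ψ r : ℝ) : ℂ) * Complex.I := by
      have hsum : (∮ w in C(0, r), f w) = ∑ k, ∮ w in C(0, r), (w - z k)⁻¹ := by
        rw [circleIntegral]
        have : (fun θ => deriv (circleMap 0 r) θ • f (circleMap 0 r θ))
            = fun θ => ∑ k, deriv (circleMap 0 r) θ • (circleMap 0 r θ - z k)⁻¹ := by
          funext θ
          simp only [hf_def, smul_eq_mul, Finset.mul_sum]
        rw [this, intervalIntegral.integral_finset_sum (fun k _ => (hck k).out)]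
        rfl
      rw [hsum]
      have hterm : ∀ k : Fin n, (∮ w in C(0, r), (w - z k)⁻¹)
          = if ‖z k‖ < r then (2*π : ℝ) * Complex.I else 0 := by
        intro k
        rcases lt_or_gt_of_ne (hne k) with hlt | hgt
        · rw [if_pos hlt]
          have : z k ∈ Metric.ball (0:ℂ) r := by
            rw [Metric.mem_ball, dist_zero_right]; exact hlt
          rw [circleIntegral.integral_sub_inv_of_mem_ball this]
          push_cast
          ring
        · rw [if_neg (not_lt.2 hgt.le)]
          refine Complex.circleIntegral_eq_zero_of_differentiable_on_off_countable
            hr0.le Set.countable_empty ?_ ?_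
          · intro w hw
            have hne' : w ≠ z k := by
              intro h
              rw [Metric.mem_closedBall, dist_zero_right, h] at hw
              exact absurd hw (not_le.2 hgt)
            exact ((((differentiableAt_id (𝕜 := ℂ) (x := w)).sub_const (z k)).inv
              (sub_ne_zero.2 hne')).continuousAt).continuousWithinAt
          · rintro w ⟨hw, -⟩
            have hne' : w ≠ z k := by
              intro h
              rw [Metric.mem_ball, dist_zero_right, h] at hw
              exact absurd hw (not_lt.2 hgt.le)
            exact ((differentiableAt_id (𝕜 := ℂ) (x := w)).sub_const (z k)).inv (sub_ne_zero.2 hne')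
      rw [Finset.sum_congr rfl (fun k _ => hterm k)]
      have : (ψ r : ℂ) = ∑ k, if ‖z k‖ < r then ((2*π : ℝ) : ℂ) else 0 := by
        rw [hψ_def, Complex.ofReal_sum]
        refine Finset.sum_congr rfl (fun k _ => ?_)
        rw [indicator_apply, apply_ite (fun x : ℝ => (x : ℂ))]
        by_cases h : ‖z k‖ < r
        · rw [if_pos (Set.mem_Ioi.2 h), if_pos h]
        · rw [if_neg (fun hh => h (Set.mem_Ioi.1 hh)), if_neg h, Complex.ofReal_zero]
      rw [this, Finset.sum_mul]
      refine Finset.sum_congr rfl (fun k _ => ?_)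
      by_cases h : ‖z k‖ < r
      · rw [if_pos h, if_pos h]
      · rw [if_neg h, if_neg h, zero_mul]
    -- norm of the circle integral equals ψ r
    have hψ_nonneg : 0 ≤ ψ r := by
      apply Finset.sum_nonneg
      intro k _
      apply indicator_nonneg
      intro _ _
      positivity
    have hψnorm : ψ r = ‖∮ w in C(0, r), f w‖ := by
      rw [hval]
      rw [norm_mul, Complex.norm_I,
        Complex.norm_real, mul_one, Real.norm_eq_abs, abs_of_nonneg hψ_nonneg]
    -- q : the integrand on the circle
    set q : ℝ → ℝ := fun θ => r * g (circleMap 0 r θ) with hq_def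
    have hqnorm : ∀ θ : ℝ, ‖deriv (circleMap 0 r) θ • f (circleMap 0 r θ)‖ = q θ := by
      intro θ
      rw [norm_smul, deriv_circleMap, norm_mul,
        Complex.norm_I, mul_one, norm_circleMap_zero, abs_of_pos hr0]
    have hcirc : ∀ θ : ℝ, (Complex.polarCoord.symm (r, θ) : ℂ) = circleMap 0 r θ := by
      intro θ
      rw [Complex.polarCoord_symm_apply, circleMap]
      rw [Complex.exp_mul_I, ← Complex.ofReal_cos, ← Complex.ofReal_sin]
      push_cast
      ring
    have hqH : ∀ θ : ℝ, H (r, θ) = q θ := by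
      intro θ
      simp only [hH_def, hq_def, smul_eq_mul]
      rw [hcirc θ]
    have hqper : Function.Periodic q (2*π) := by
      intro θ
      simp only [hq_def]
      rw [periodic_circleMap 0 r θ]
    calc ψ r = ‖∮ w in C(0, r), f w‖ := hψnorm
    _ ≤ ∫ θ in (0:ℝ)..2*π, ‖deriv (circleMap 0 r) θ • f (circleMap 0 r θ)‖ := by
        rw [circleIntegral] at *
        exact intervalIntegral.norm_integral_le_integral_norm Real.two_pi_pos.le
    _ = ∫ θ in (0:ℝ)..2*π, q θ := by
        refine intervalIntegral.integral_congr (fun θ _ => hqnorm θ)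
    _ = ∫ θ in (-π:ℝ)..π, q θ := by
        have := hqper.intervalIntegral_add_eq (-π) 0
        rw [zero_add] at this
        rw [← this]
        congr 1
        ring
    _ = ∫ θ in Ioo (-π:ℝ) π, q θ := by
        rw [intervalIntegral.integral_of_le (by linarith [Real.pi_pos]),
          integral_Ioc_eq_integral_Ioo]
    _ = φ r := by
        rw [hφ_def]
        exact (setIntegral_congr_fun measurableSet_Ioo (fun θ _ => hqH θ)).symm
  -- a.e. inequality
  have hle : ψ ≤ᵐ[volume.restrict (Ioo (0:ℝ) 1)] φ := by
    have hT : volume (⋃ k : Fin n, {(‖z k‖ : ℝ)}) = 0 :=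
      measure_iUnion_null (fun k => measure_singleton _)
    have h0 : ∀ᵐ r : ℝ ∂(volume.restrict (Ioo (0:ℝ) 1)),
        r ∉ ⋃ k : Fin n, {(‖z k‖ : ℝ)} := by
      refine Filter.Eventually.filter_mono (ae_mono Measure.restrict_le_self) ?_
      rw [ae_iff]
      simpa only [not_not, setOf_mem_eq] using hT
    have h1 : ∀ᵐ r : ℝ ∂(volume.restrict (Ioo (0:ℝ) 1)), r ∈ Ioo (0:ℝ) 1 :=
      ae_restrict_mem measurableSet_Ioo
    filter_upwards [h0, h1] with r hr0 hr1
    refine hpt r hr1 (fun k => ?_)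
    intro h
    exact hr0 (Set.mem_iUnion.2 ⟨k, by simp [h]⟩)
  exact integral_mono_ae hψInt hφInt hle
end
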